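/- Let n ≥ a ≥ b ≥ c ≥ 0 be integers with b < a < n. If none of the four numbers n−a, b−c+1, b−c+2, b+2 is divisible by a−b+1, then τ^n_{a+1,b+1,c} / τ^n_{a,b,c} is a 2-link. -/
import Mathlib


/-- An arithmetic progression: a proper subset of `ℤ` that is empty, a singleton,
or of the form `n + mℤ` with `m ≥ 2`. -/
def IsAP (Λ : Set ℤ) : Prop :=
  Λ ≠ Set.univ ∧
    (Λ = ∅ ∨ (∃ n : ℤ, Λ = {n}) ∨
      ∃ n m : ℤ, 2 ≤ m ∧ Λ = {x : ℤ | ∃ k : ℤ, x = n + m * k})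
/-- `α i` is increasable: the sequence stays nondecreasing after increasing entry `i` by 1. -/
def Increasable {m : ℕ} (α : Fin m → ℤ) (i : Fin m) : Prop :=
  Monotone (Function.update α i (α i + 1))

/-- `α i` is decreasable: the sequence stays nondecreasing after decreasing entry `i` by 1. -/
def Decreasable {m : ℕ} (α : Fin m → ℤ) (i : Fin m) : Prop :=
  Monotone (Function.update α i (α i - 1))

open Classical in
/-- Upward displacement of a ramification sequence along `Λ`. -/
noncomputable def dispPlus {m : ℕ} (Λ : Set ℤ) (α : Fin m → ℤ) : Fin m → ℤ :=
  fun i => if Increasable α i ∧ α i + (i.val : ℤ) + 1 ∈ Λ then α i + 1 else α i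

open Classical in
/-- Downward displacement of a ramification sequence along `Λ`. -/
noncomputable def dispMinus {m : ℕ} (Λ : Set ℤ) (α : Fin m → ℤ) : Fin m → ℤ :=
  fun i => if Decreasable α i ∧ α i + (i.val : ℤ) ∈ Λ then α i - 1 else α i
/-- `α` and `β` are linked by `Λ` if `α = disp⁻_Λ(β)` and `β = disp⁺_Λ(α)`. -/
def LinkedBy {m : ℕ} (Λ : Set ℤ) (α β : Fin m → ℤ) : Prop :=
  α = dispMinus Λ β ∧ β = dispPlus Λ α

/-- `α` and `β` are linked if they are linked by some arithmetic progression. -/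
def Linked {m : ℕ} (α β : Fin m → ℤ) : Prop :=
  ∃ Λ : Set ℤ, IsAP Λ ∧ LinkedBy Λ α β

/-- The size `|β / α|` of the skew shape `β / α`. -/
def skewSize {m : ℕ} (α β : Fin m → ℤ) : ℤ := ∑ i, (β i - α i)

/-- `β / α` is an `n`-link: `α, β` are linked and `|β / α| = n`. -/
def IsNLink (n : ℤ) {m : ℕ} (α β : Fin m → ℤ) : Prop :=
  Linked α β ∧ skewSize α β = n
/-- The rank-`(n-1)` ramification sequence `τ^n_{a,b,c} = 0^{n-a} 1^{a-b} 2^{b-c} 3^c`. -/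
def tau (n a b c : ℕ) : Fin n → ℤ :=
  fun i => if i.val < n - a then 0 else if i.val < n - b then 1 else
    if i.val < n - c then 2 else 3


lemma inc_iff {m : ℕ} (α : Fin m → ℤ) (hm : Monotone α) (i : Fin m) :
    Increasable α i ↔ ∀ j, i < j → α i + 1 ≤ α j := by
  constructor
  · intro h j hij
    have h2 := h hij.le
    rwa [Function.update_self, Function.update_of_ne hij.ne'] at h2
  · intro h j k hjk
    rw [Function.update_apply, Function.update_apply]
    split_ifs with h1 h2 h2
    · exact le_refl _
    · subst h1
      exact h k (lt_of_le_of_ne hjk (Ne.symm h2))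
    · subst h2
      exact le_trans (hm hjk) (by linarith)
    · exact hm hjk

lemma dec_iff {m : ℕ} (α : Fin m → ℤ) (hm : Monotone α) (i : Fin m) :
    Decreasable α i ↔ ∀ j, j < i → α j ≤ α i - 1 := by
  constructor
  · intro h j hij
    have h2 := h hij.le
    rwa [Function.update_of_ne hij.ne, Function.update_self] at h2
  · intro h j k hjk
    rw [Function.update_apply, Function.update_apply]
    split_ifs with h1 h2 h2
    · exact le_refl _
    · subst h1
      exact le_trans (by linarith) (hm hjk)
    · subst h2
      exact h j (lt_of_le_of_ne hjk h1)
    · exact hm hjk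

set_option maxHeartbeats 1600000 in
/-- If `b < a < n` and none of `n−a`, `b−c+1`, `b−c+2`, `b+2` is divisible by `a−b+1`,
then `τ^n_{a+1,b+1,c} / τ^n_{a,b,c}` is a 2-link. -/
theorem tau_two_link_ab (n a b c : ℕ) (h0 : c ≤ b) (h1 : b < a) (h2 : a < n)
    (hd1 : ¬ ((a : ℤ) - b + 1 ∣ (n : ℤ) - a))
    (hd2 : ¬ ((a : ℤ) - b + 1 ∣ (b : ℤ) - c + 1))
    (hd3 : ¬ ((a : ℤ) - b + 1 ∣ (b : ℤ) - c + 2))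
    (hd4 : ¬ ((a : ℤ) - b + 1 ∣ (b : ℤ) + 2)) :
    IsNLink 2 (tau n a b c) (tau n (a+1) (b+1) c) := by
  have hmα : Monotone (tau n a b c) := by
    intro j k hjk
    have hv := Fin.le_def.mp hjk
    simp only [tau]
    split_ifs <;> omega
  have hmβ : Monotone (tau n (a+1) (b+1) c) := by
    intro j k hjk
    have hv := Fin.le_def.mp hjk
    simp only [tau]
    split_ifs <;> omega
  set Λ : Set ℤ := {x : ℤ | ∃ k : ℤ, x = ((n:ℤ) - a) + ((a:ℤ) - b + 1) * k} with hΛ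
  have hmem : ∀ x : ℤ, x ∈ Λ → ∃ k : ℤ, x - ((n:ℤ) - a) = ((a:ℤ) - b + 1) * k := by
    rintro x ⟨k, rfl⟩; exact ⟨k, by ring⟩
  have mem1 : ((n:ℤ) - a) ∈ Λ := ⟨0, by ring⟩
  have mem2 : ((n:ℤ) - b + 1) ∈ Λ := ⟨1, by ring⟩
  have nm0 : (0:ℤ) ∉ Λ := by
    intro h; rcases hmem _ h with ⟨k, hk⟩
    exact hd1 ⟨-k, by linear_combination -hk⟩
  have nm2 : ((n:ℤ) - c + 2) ∉ Λ := by
    intro h; rcases hmem _ h with ⟨k, hk⟩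
    exact hd2 ⟨k - 1, by linear_combination hk⟩
  have nm3 : ((n:ℤ) - c + 3) ∉ Λ := by
    intro h; rcases hmem _ h with ⟨k, hk⟩
    exact hd3 ⟨k - 1, by linear_combination hk⟩
  have nm4 : ((n:ℤ) + 3) ∉ Λ := by
    intro h; rcases hmem _ h with ⟨k, hk⟩
    exact hd4 ⟨k - 1, by linear_combination hk⟩
  constructor
  · refine ⟨Λ, ⟨?_, Or.inr (Or.inr ⟨(n:ℤ) - a, (a:ℤ) - b + 1, by omega, rfl⟩)⟩, ?_, ?_⟩
    · -- Λ ≠ univ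
      intro h
      rcases hmem ((n:ℤ) - a + 1) (by rw [h]; trivial) with ⟨k, hk⟩
      have hdvd : ((a:ℤ) - b + 1) ∣ 1 := ⟨k, by linear_combination hk⟩
      have := Int.le_of_dvd one_pos hdvd
      have hab : (b:ℤ) < a := by exact_mod_cast h1
      linarith
    · -- tau n a b c = dispMinus Λ β
      funext i
      show tau n a b c i = dispMinus Λ (tau n (a+1) (b+1) c) i
      rw [dispMinus]
      by_cases hia : i.val = n - a - 1
      · rw [if_pos]
        · simp only [tau]; split_ifs <;> omega
        constructor
        · rw [dec_iff _ hmβ]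
          intro j hij
          have hj := Fin.lt_def.mp hij
          simp only [tau]; split_ifs <;> omega
        · have hv : tau n (a+1) (b+1) c i = 1 := by
            simp only [tau]; split_ifs <;> omega
          rw [hv]
          have he : (1:ℤ) + (i.val : ℤ) = (n:ℤ) - a := by omega
          rw [he]; exact mem1
      · by_cases hib : i.val = n - b - 1
        · rw [if_pos]
          · simp only [tau]; split_ifs <;> omega
          constructor
          · rw [dec_iff _ hmβ]
            intro j hij
            have hj := Fin.lt_def.mp hij
            simp only [tau]; split_ifs <;> omega
          · have hv : tau n (a+1) (b+1) c i = 2 := by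
              simp only [tau]; split_ifs <;> omega
            rw [hv]
            have he : (2:ℤ) + (i.val : ℤ) = (n:ℤ) - b + 1 := by omega
            rw [he]; exact mem2
        · rw [if_neg]
          · simp only [tau]; split_ifs <;> omega
          by_cases hi0 : i.val = 0
          · rintro ⟨-, hmm⟩
            have hv : tau n (a+1) (b+1) c i = 0 := by
              simp only [tau]; split_ifs <;> omega
            rw [hv, show (0:ℤ) + (i.val : ℤ) = 0 by omega] at hmm
            exact nm0 hmm
          · by_cases hic : i.val = n - c ∧ 0 < c
            · rintro ⟨-, hmm⟩
              have hv : tau n (a+1) (b+1) c i = 3 := by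
                simp only [tau]; split_ifs <;> omega
              rw [hv, show (3:ℤ) + (i.val : ℤ) = (n:ℤ) - c + 3 by omega] at hmm
              exact nm3 hmm
            · rintro ⟨hdec, -⟩
              rw [dec_iff _ hmβ] at hdec
              have hlt : i.val - 1 < n := by omega
              have hji : (⟨i.val - 1, hlt⟩ : Fin n) < i := by
                rw [Fin.lt_def]; simp; omega
              have h3 := hdec _ hji
              have heq : tau n (a+1) (b+1) c (⟨i.val - 1, hlt⟩ : Fin n)
                  = tau n (a+1) (b+1) c i := by
                simp only [tau]; split_ifs <;> omega
              rw [heq] at h3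
              omega
    · -- β = dispPlus Λ α
      funext i
      show tau n (a+1) (b+1) c i = dispPlus Λ (tau n a b c) i
      rw [dispPlus]
      by_cases hia : i.val = n - a - 1
      · rw [if_pos]
        · simp only [tau]; split_ifs <;> omega
        constructor
        · rw [inc_iff _ hmα]
          intro j hij
          have hj := Fin.lt_def.mp hij
          simp only [tau]; split_ifs <;> omega
        · have hv : tau n a b c i = 0 := by
            simp only [tau]; split_ifs <;> omega
          rw [hv]
          rw [show (0:ℤ) + (i.val : ℤ) + 1 = (n:ℤ) - a by omega]
          exact mem1
      · by_cases hib : i.val = n - b - 1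
        · rw [if_pos]
          · simp only [tau]; split_ifs <;> omega
          constructor
          · rw [inc_iff _ hmα]
            intro j hij
            have hj := Fin.lt_def.mp hij
            simp only [tau]; split_ifs <;> omega
          · have hv : tau n a b c i = 1 := by
              simp only [tau]; split_ifs <;> omega
            rw [hv]
            rw [show (1:ℤ) + (i.val : ℤ) + 1 = (n:ℤ) - b + 1 by omega]
            exact mem2
        · rw [if_neg]
          · simp only [tau]; split_ifs <;> omega
          by_cases hic : i.val = n - c - 1 ∧ c < b
          · rintro ⟨-, hmm⟩
            have hv : tau n a b c i = 2 := by
              simp only [tau]; split_ifs <;> omega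
            rw [hv, show (2:ℤ) + (i.val : ℤ) + 1 = (n:ℤ) - c + 2 by omega] at hmm
            exact nm2 hmm
          · by_cases hin : i.val = n - 1 ∧ 0 < c
            · rintro ⟨-, hmm⟩
              have hv : tau n a b c i = 3 := by
                simp only [tau]; split_ifs <;> omega
              rw [hv, show (3:ℤ) + (i.val : ℤ) + 1 = (n:ℤ) + 3 by omega] at hmm
              exact nm4 hmm
            · rintro ⟨hinc, -⟩
              rw [inc_iff _ hmα] at hinc
              have hlt : i.val + 1 < n := by omega
              have hji : i < (⟨i.val + 1, hlt⟩ : Fin n) := by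
                rw [Fin.lt_def]; simp
              have h3 := hinc _ hji
              have heq : tau n a b c (⟨i.val + 1, hlt⟩ : Fin n) = tau n a b c i := by
                simp only [tau]; split_ifs <;> omega
              rw [heq] at h3
              omega
  · -- skewSize
    have hpt : ∀ i : Fin n, tau n (a+1) (b+1) c i - tau n a b c i
        = (if i.val = n - a - 1 then (1:ℤ) else 0) + (if i.val = n - b - 1 then (1:ℤ) else 0) := by
      intro i
      simp only [tau]
      split_ifs <;> omega
    have hone : ∀ (t : ℕ), t < n → (∑ i : Fin n, if i.val = t then (1:ℤ) else 0) = 1 := by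
      intro t ht
      rw [Finset.sum_congr rfl (fun i _ => ?_)]
      · exact Finset.sum_ite_eq' Finset.univ (⟨t, ht⟩ : Fin n) (fun _ => (1:ℤ)) |>.trans
          (by simp)
      · show (if i.val = t then (1:ℤ) else 0) = if i = (⟨t, ht⟩ : Fin n) then (1:ℤ) else 0
        congr 1
        simp [Fin.ext_iff]
    rw [skewSize]
    simp only [hpt]
    rw [Finset.sum_add_distrib, hone _ (by omega), hone _ (by omega)]
    norm_num
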